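/- arXiv:2510.00301 — 3 statements merged into one kernel-verified Lean document; each statement's English description precedes it below -/
import Mathlib

section
/- For integers k ≥ 2 and m ≥ 4, define L(k,m) = f^{(k,k,1^m)} + f^{(k+1,k+1,1^{m−2})} + f^{(k+2,k+2,1^{m−4})}. Then: if m ≤ k, L(k,m) = f^{(k+2,k,1^{m−2})} + f^{(k,k,m)}; if m = k+1 or m = k+2, L(k,m) = f^{(k+2,k,1^{m−2})}; and if m ≥ k+3, L(k,m) = f^{(k+2,k,1^{m−2})} + f^{(m−2,k+1,k+1)}. -/
/-!
In a standard tableau with `n + 1` cells the entry `n` sits at the end of a corner row, and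
erasing it is a bijection onto the standard tableaux of the shape with that corner removed. So
`f^λ` is the sum of `f^μ` over the shapes `μ` obtained from `λ` by removing one corner. By
induction on the number of cells this recursion identifies `f^(r,s,t)` with Frobenius' formula
`n! Δ(r+2, s+1, t) / ((r+2)! (s+1)! t!)` and `f^(a,b,1^t)` with the hook length formula.
The claim then reduces to one identity of rational functions of `k` and `m`, together with the
behaviour of `Δ(k+2, k+1, m)`: it vanishes for `m ∈ {k+1, k+2}`, and for `m ≥ k+3` it is a
cyclic permutation of `Δ(m, k+2, k+1)`, giving `f^(m-2,k+1,k+1)`.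
-/


/-- A cell `c = (i, j)` lies in the Young diagram whose row lengths are given by the
list `l` if `j < l[i]` (rows and columns indexed from `0`). -/
def InShape (l : List ℕ) (c : ℕ × ℕ) : Prop := c.2 < l.getD c.1 0

/-- `T` is a standard Young tableau of the shape with row lengths `l`: the entries give a
bijection from the cells of the shape to `{0, …, n-1}` (where `n = l.sum` is the number of
cells), entries strictly increase along rows and down columns, and `T` vanishes outside
the shape. -/
def IsSYT (l : List ℕ) (T : ℕ × ℕ → ℕ) : Prop :=
  Set.BijOn T {c : ℕ × ℕ | InShape l c} (Set.Iio l.sum) ∧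
  (∀ i j, InShape l (i, j + 1) → T (i, j) < T (i, j + 1)) ∧
  (∀ i j, InShape l (i + 1, j) → T (i, j) < T (i + 1, j)) ∧
  (∀ c, ¬ InShape l c → T c = 0)

open Classical in
/-- The number `f^l` of standard Young tableaux of shape `l`, defined to be `0` when `l`
is not a partition (i.e. not weakly decreasing). -/
noncomputable def fSYT (l : List ℕ) : ℕ :=
  if List.Pairwise (· ≥ ·) l then Nat.card {T : ℕ × ℕ → ℕ // IsSYT l T} else 0

/-- `f^{(a,b,1^t)}` with an integer number `t` of trailing parts equal to `1`;
it is `0` whenever `t < 0` or the resulting list is not a partition. -/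
noncomputable def fHook (a b : ℕ) (t : ℤ) : ℕ :=
  if 0 ≤ t then fSYT (a :: b :: List.replicate t.toNat 1) else 0

/-- `f^{(r,s,t)}` for integers `r`, `s`, `t`; it is `0` whenever `(r,s,t)` is not
a partition. -/
noncomputable def f3 (r s t : ℤ) : ℕ :=
  if 0 ≤ r ∧ 0 ≤ s ∧ 0 ≤ t then fSYT [r.toNat, s.toNat, t.toNat] else 0

open Function
open scoped Nat

section Shapes

variable {l : List ℕ}

lemma List.getD_le_sum (l : List ℕ) (i : ℕ) : l.getD i 0 ≤ l.sum := by
  rcases lt_or_ge i l.length with h | h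
  · rw [List.getD_eq_getElem _ _ h]
    exact List.le_sum_of_mem (List.getElem_mem h)
  · rw [List.getD_eq_default _ _ h]
    exact Nat.zero_le _

lemma List.pairwise_ge_iff_getD :
    l.Pairwise (· ≥ ·) ↔ ∀ i, l.getD (i + 1) 0 ≤ l.getD i 0 := by
  rw [← List.isChain_iff_pairwise, List.isChain_iff_getElem]
  refine ⟨fun h i => ?_, fun h i hi => ?_⟩
  · rcases lt_or_ge (i + 1) l.length with hi | hi
    · rw [List.getD_eq_getElem _ _ hi, List.getD_eq_getElem _ _ (by omega)]
      exact h i hi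
    · rw [List.getD_eq_default _ _ hi]
      exact Nat.zero_le _
  · have := h i
    rwa [List.getD_eq_getElem _ _ hi, List.getD_eq_getElem _ _ (by omega : i < l.length)] at this

lemma InShape.lt_length {c : ℕ × ℕ} (h : InShape l c) : c.1 < l.length := by
  by_contra hc
  rw [InShape, List.getD_eq_default _ _ (not_lt.mp hc)] at h
  exact Nat.not_lt_zero _ h

lemma InShape.lt_sum {c : ℕ × ℕ} (h : InShape l c) : c.2 < l.sum :=
  h.trans_le (l.getD_le_sum c.1)

lemma InShape.of_succ_fst (hl : l.Pairwise (· ≥ ·)) {i j : ℕ} (h : InShape l (i + 1, j)) :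
    InShape l (i, j) :=
  h.trans_le (List.pairwise_ge_iff_getD.mp hl i)

lemma finite_setOf_inShape (l : List ℕ) : {c | InShape l c}.Finite :=
  ((Set.finite_Iio l.length).prod (Set.finite_Iio l.sum)).subset
    fun _ hc => ⟨InShape.lt_length hc, InShape.lt_sum hc⟩

end Shapes

section Tableaux

variable {l : List ℕ}

lemma IsSYT.eq_zero {T : ℕ × ℕ → ℕ} (hT : IsSYT l T) {c : ℕ × ℕ} (hc : ¬ InShape l c) :
    T c = 0 :=
  hT.2.2.2 c hc

lemma finite_setOf_isSYT (l : List ℕ) : {T | IsSYT l T}.Finite := by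
  have := (finite_setOf_inShape l).to_subtype
  refine Set.Finite.of_finite_image (f := fun T => {c | InShape l c}.domRestrict T) ?_ ?_
  · refine (Set.Finite.pi (t := fun _ => Set.Iio l.sum) fun _ => Set.finite_Iio _).subset ?_
    rintro _ ⟨T, hT, rfl⟩ c -
    exact hT.1.mapsTo c.2
  · intro T₁ h₁ T₂ h₂ h
    funext c
    by_cases hc : InShape l c
    · exact congrFun h ⟨c, hc⟩
    · rw [IsSYT.eq_zero h₁ hc, IsSYT.eq_zero h₂ hc]

lemma fSYT_eq_ncard (hl : l.Pairwise (· ≥ ·)) : fSYT l = {T | IsSYT l T}.ncard := by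
  rw [fSYT, if_pos hl, ← Nat.card_coe_set_eq]
  rfl

lemma fSYT_nil : fSYT [] = 1 := by
  rw [fSYT_eq_ncard List.Pairwise.nil, Set.ncard_eq_one]
  refine ⟨0, Set.eq_singleton_iff_unique_mem.mpr ⟨?_, fun T hT => ?_⟩⟩
  · refine ⟨?_, fun _ _ h => ?_, fun _ _ h => ?_, fun _ _ => rfl⟩
    · simp [InShape]
    all_goals simp [InShape] at h
  · funext c
    exact hT.eq_zero (by simp [InShape])

lemma fSYT_append_zero (l : List ℕ) : fSYT (l ++ [0]) = fSYT l := by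
  have hshape : InShape (l ++ [0]) = InShape l := by
    funext c
    rcases lt_or_ge c.1 l.length with h | h
    · rw [InShape, InShape, List.getD_append _ _ _ _ h]
    · rw [InShape, InShape, List.getD_append_right _ _ _ _ h, List.getD_eq_default _ _ h]
      simp
  have hsorted : (l ++ [0]).Pairwise (· ≥ ·) ↔ l.Pairwise (· ≥ ·) := by
    simp [List.pairwise_append]
  simp only [fSYT, IsSYT, hshape, hsorted, List.sum_append, List.sum_singleton, add_zero]

end Tableaux

section Corners

variable {l : List ℕ} {i : ℕ}

def IsCornerRow (l : List ℕ) (i : ℕ) : Prop := l.getD (i + 1) 0 < l.getD i 0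

instance (l : List ℕ) : DecidablePred (IsCornerRow l) :=
  fun _ => inferInstanceAs (Decidable (_ < _))

lemma IsCornerRow.pos (hi : IsCornerRow l i) : 0 < l.getD i 0 :=
  (Nat.zero_le _).trans_lt hi

lemma IsCornerRow.lt_length (hi : IsCornerRow l i) : i < l.length := by
  by_contra h
  have := hi.pos
  rw [List.getD_eq_default _ _ (not_lt.mp h)] at this
  exact Nat.lt_irrefl 0 this

lemma IsCornerRow.inShape (hi : IsCornerRow l i) : InShape l (i, l.getD i 0 - 1) := by
  have := hi.pos
  simp only [InShape]
  omega

lemma List.getD_modify_pred (l : List ℕ) (i j : ℕ) :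
    (l.modify i (· - 1)).getD j 0 = if j = i then l.getD i 0 - 1 else l.getD j 0 := by
  rcases eq_or_ne j i with rfl | h
  · rw [if_pos rfl]
    simp only [List.getD_eq_getElem?_getD, List.getElem?_modify_eq]
    cases l[j]? <;> rfl
  · simp only [if_neg h, List.getD_eq_getElem?_getD, List.getElem?_modify_ne _ _ (Ne.symm h)]

lemma List.sum_modify_pred (h : 0 < l.getD i 0) : (l.modify i (· - 1)).sum + 1 = l.sum := by
  induction l generalizing i with
  | nil => simp at h
  | cons a l ih =>
    cases i with
    | zero =>
      simp only [List.getD_cons_zero] at h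
      simp only [List.modify_zero_cons, List.sum_cons]
      omega
    | succ i =>
      simp only [List.getD_cons_succ] at h
      simp only [List.modify_succ_cons, List.sum_cons]
      have := ih h
      omega

lemma inShape_modify_pred_iff {c : ℕ × ℕ} :
    InShape (l.modify i (· - 1)) c ↔ InShape l c ∧ c ≠ (i, l.getD i 0 - 1) := by
  obtain ⟨r, j⟩ := c
  simp only [InShape, List.getD_modify_pred, ne_eq, Prod.mk.injEq]
  split_ifs with h
  · subst h
    omega
  · tauto

lemma setOf_inShape_modify_pred :
    {c | InShape (l.modify i (· - 1)) c} = {c | InShape l c} \ {(i, l.getD i 0 - 1)} := by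
  ext c
  simp [inShape_modify_pred_iff]

lemma IsCornerRow.pairwise_modify_pred (hl : l.Pairwise (· ≥ ·)) (hi : IsCornerRow l i) :
    (l.modify i (· - 1)).Pairwise (· ≥ ·) := by
  have hi' : l.getD (i + 1) 0 < l.getD i 0 := hi
  rw [List.pairwise_ge_iff_getD] at hl ⊢
  intro j
  have := hl j
  simp only [List.getD_modify_pred]
  split_ifs <;> subst_vars <;> omega

end Corners

section Branching

variable {l : List ℕ} {i n : ℕ} {T : ℕ × ℕ → ℕ}

lemma IsSYT.erase_corner (hT : IsSYT l T) (hi : IsCornerRow l i) (hn : l.sum = n + 1)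
    (hTc : T (i, l.getD i 0 - 1) = n) :
    IsSYT (l.modify i (· - 1)) (update T (i, l.getD i 0 - 1) 0) := by
  have hi' : l.getD (i + 1) 0 < l.getD i 0 := hi
  have hsum : (l.modify i (· - 1)).sum = n := by
    have := List.sum_modify_pred hi.pos
    omega
  refine ⟨?_, fun r j h => ?_, fun r j h => ?_, fun d hd => ?_⟩
  · rw [setOf_inShape_modify_pred, hsum, ← Set.Iic_sdiff_right, ← Set.Iio_add_one_eq_Iic, ← hn,
      ← hTc]
    exact (hT.1.sdiff_singleton hi.inShape).congr fun d hd => (update_of_ne hd.2 _ _).symm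
  · obtain ⟨h, hne⟩ := inShape_modify_pred_iff.mp h
    have hne' : (r, j) ≠ (i, l.getD i 0 - 1) := by
      rintro ⟨⟩
      simp only [InShape] at h
      omega
    rw [update_of_ne hne, update_of_ne hne']
    exact hT.2.1 r j h
  · obtain ⟨h, hne⟩ := inShape_modify_pred_iff.mp h
    have hne' : (r, j) ≠ (i, l.getD i 0 - 1) := by
      rintro ⟨⟩
      simp only [InShape] at h
      omega
    rw [update_of_ne hne, update_of_ne hne']
    exact hT.2.2.1 r j h
  · by_cases hc : d = (i, l.getD i 0 - 1)
    · rw [hc, update_self]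
    · rw [update_of_ne hc]
      exact hT.eq_zero fun h => hd (inShape_modify_pred_iff.mpr ⟨h, hc⟩)

lemma IsSYT.extend_corner (hl : l.Pairwise (· ≥ ·)) (hi : IsCornerRow l i)
    (hn : l.sum = n + 1) (hT : IsSYT (l.modify i (· - 1)) T) :
    IsSYT l (update T (i, l.getD i 0 - 1) n) := by
  have hi' : l.getD (i + 1) 0 < l.getD i 0 := hi
  have hsum : (l.modify i (· - 1)).sum = n := by
    have := List.sum_modify_pred hi.pos
    omega
  have hlt : ∀ d, InShape l d → d ≠ (i, l.getD i 0 - 1) → T d < n := fun d hd hne =>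
    hsum ▸ hT.1.mapsTo (inShape_modify_pred_iff.mpr ⟨hd, hne⟩)
  refine ⟨?_, fun r j h => ?_, fun r j h => ?_, fun d hd => ?_⟩
  · have hbij := (hT.1.congr fun d hd => (update_of_ne (inShape_modify_pred_iff.mp hd).2 n T).symm)
      |>.insert (a := (i, l.getD i 0 - 1)) (by simp [hsum])
    have hmem : (i, l.getD i 0 - 1) ∈ {c | InShape l c} := hi.inShape
    rwa [setOf_inShape_modify_pred, Set.insert_sdiff_self_of_mem hmem, update_self, hsum,
      Set.Iio_insert, ← Set.Iio_add_one_eq_Iic, ← hn] at hbij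
  · by_cases hc : (r, j + 1) = (i, l.getD i 0 - 1)
    · obtain ⟨rfl, hj⟩ := Prod.mk.inj hc
      have hne : (r, j) ≠ (r, l.getD r 0 - 1) := by
        simp only [ne_eq, Prod.mk.injEq, true_and]
        omega
      rw [hc, update_self, update_of_ne hne]
      exact hlt _ (h.trans' (Nat.lt_succ_self j)) hne
    · have hne : (r, j) ≠ (i, l.getD i 0 - 1) := by
        rintro ⟨⟩
        simp only [InShape] at h
        omega
      rw [update_of_ne hc, update_of_ne hne]
      exact hT.2.1 r j (inShape_modify_pred_iff.mpr ⟨h, hc⟩)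
  · by_cases hc : (r + 1, j) = (i, l.getD i 0 - 1)
    · obtain ⟨rfl, rfl⟩ := Prod.mk.inj hc
      have hne : (r, l.getD (r + 1) 0 - 1) ≠ (r + 1, l.getD (r + 1) 0 - 1) := by simp
      rw [update_self, update_of_ne hne]
      exact hlt _ (h.of_succ_fst hl) hne
    · have hne : (r, j) ≠ (i, l.getD i 0 - 1) := by
        rintro ⟨⟩
        simp only [InShape] at h
        omega
      rw [update_of_ne hc, update_of_ne hne]
      exact hT.2.2.1 r j (inShape_modify_pred_iff.mpr ⟨h, hc⟩)
  · have hne : d ≠ (i, l.getD i 0 - 1) := fun h => hd (h ▸ hi.inShape)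
    rw [update_of_ne hne]
    exact hT.eq_zero fun h => hd (inShape_modify_pred_iff.mp h).1

lemma ncard_setOf_isSYT_corner_eq_fSYT (hl : l.Pairwise (· ≥ ·)) (hi : IsCornerRow l i)
    (hn : l.sum = n + 1) :
    {T | IsSYT l T ∧ T (i, l.getD i 0 - 1) = n}.ncard = fSYT (l.modify i (· - 1)) := by
  rw [fSYT_eq_ncard (hi.pairwise_modify_pred hl)]
  refine Set.BijOn.ncard_eq (Set.InvOn.bijOn (f := (update · (i, l.getD i 0 - 1) 0))
    (f' := (update · (i, l.getD i 0 - 1) n))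
    ⟨fun T hT => ?_, fun T hT => ?_⟩ (fun T hT => ?_) fun T hT => ?_)
  · simp only [update_idem]
    rw [← hT.2, update_eq_self]
  · simp only [update_idem, update_eq_self_iff]
    exact (IsSYT.eq_zero hT fun h => (inShape_modify_pred_iff.mp h).2 rfl).symm
  · exact hT.1.erase_corner hi hn hT.2
  · exact ⟨IsSYT.extend_corner hl hi hn hT, update_self ..⟩

lemma IsSYT.exists_isCornerRow (hT : IsSYT l T) (hn : l.sum = n + 1) :
    ∃ i, IsCornerRow l i ∧ T (i, l.getD i 0 - 1) = n := by
  obtain ⟨⟨r, j⟩, hc, hTc⟩ := hT.1.surjOn (show n ∈ Set.Iio l.sum by simp [hn])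
  have hright : ¬ InShape l (r, j + 1) := fun h => by
    have := hT.1.mapsTo h
    have := hT.2.1 r j h
    simp only [Set.mem_Iio] at *
    omega
  have hbelow : ¬ InShape l (r + 1, j) := fun h => by
    have := hT.1.mapsTo h
    have := hT.2.2.1 r j h
    simp only [Set.mem_Iio] at *
    omega
  have hc : j < l.getD r 0 := hc
  simp only [InShape, not_lt] at hright hbelow
  refine ⟨r, show l.getD (r + 1) 0 < l.getD r 0 by omega, ?_⟩
  rwa [show l.getD r 0 - 1 = j by omega]

theorem fSYT_eq_sum_ite_isCornerRow (hl : l.Pairwise (· ≥ ·)) (hn : l.sum = n + 1)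
    (s : Finset ℕ) (hs : ∀ i, IsCornerRow l i → i ∈ s) :
    fSYT l = ∑ i ∈ s, if IsCornerRow l i then fSYT (l.modify i (· - 1)) else 0 := by
  set S : ℕ → Set (ℕ × ℕ → ℕ) := fun i => {T | IsSYT l T ∧ T (i, l.getD i 0 - 1) = n}
  have hcover : {T | IsSYT l T} = ⋃ i ∈ (s.filter (IsCornerRow l) : Set ℕ), S i := by
    ext T
    simp only [Set.mem_ofPred_eq, Set.mem_iUnion, Finset.coe_filter, exists_prop, S]
    refine ⟨fun hT => ?_, fun ⟨_, _, hT, _⟩ => hT⟩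
    obtain ⟨i, hi, hTi⟩ := hT.exists_isCornerRow hn
    exact ⟨i, ⟨hs i hi, hi⟩, hT, hTi⟩
  have hdisj : (s.filter (IsCornerRow l) : Set ℕ).PairwiseDisjoint S := by
    intro i hi j hj hij
    refine Set.disjoint_left.mpr fun T ⟨hT, hTi⟩ ⟨_, hTj⟩ => hij ?_
    simp only [Finset.coe_filter, Set.mem_ofPred_eq] at hi hj
    exact congrArg Prod.fst (hT.1.injOn hi.2.inShape hj.2.inShape (hTi.trans hTj.symm))
  rw [fSYT_eq_ncard hl, hcover,
    Set.Finite.ncard_biUnion (Finset.finite_toSet _)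
      (fun i _ => (finite_setOf_isSYT l).subset fun _ hT => hT.1) hdisj,
    finsum_mem_coe_finset, Finset.sum_filter]
  refine Finset.sum_congr rfl fun i _ => ?_
  split_ifs with hi
  · exact ncard_setOf_isSYT_corner_eq_fSYT hl hi hn
  · rfl

end Branching

lemma fSYT_three_rows_recursion {r s t : ℕ} (hts : t ≤ s) (hsr : s ≤ r) (hr : 0 < r) :
    fSYT [r, s, t] = (if s < r then fSYT [r - 1, s, t] else 0)
      + (if t < s then fSYT [r, s - 1, t] else 0) + (if 0 < t then fSYT [r, s, t - 1] else 0) := by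
  have hl : [r, s, t].Pairwise (· ≥ ·) := by simp [hts, hsr, hts.trans hsr]
  rw [fSYT_eq_sum_ite_isCornerRow hl (n := r + s + t - 1) (by simp; omega) (Finset.range 3)
    fun i hi => Finset.mem_range.mpr hi.lt_length]
  simp [Finset.sum_range_succ, IsCornerRow]

lemma List.replicate_succ_modify_pred (u : ℕ) :
    (List.replicate (u + 1) 1).modify u (· - 1) = List.replicate u 1 ++ [0] := by
  induction u with
  | zero => rfl
  | succ u ih => rw [List.replicate_succ, List.modify_succ_cons, ih]; rfl

lemma fSYT_hook_recursion {a b : ℕ} (hb : 1 ≤ b) (hba : b ≤ a) (u : ℕ) :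
    fSYT (a :: b :: List.replicate (u + 1) 1)
      = (if b < a then fSYT ((a - 1) :: b :: List.replicate (u + 1) 1) else 0)
        + (if 1 < b then fSYT (a :: (b - 1) :: List.replicate (u + 1) 1) else 0)
        + fSYT (a :: b :: List.replicate u 1) := by
  have hl : (a :: b :: List.replicate (u + 1) 1).Pairwise (· ≥ ·) := by
    simp [List.pairwise_replicate, List.mem_replicate]
    omega
  have hgetD (j : ℕ) : (a :: b :: List.replicate (u + 1) 1).getD (j + 2) 0
      = if j < u + 1 then 1 else 0 := by
    simp only [List.getD_eq_getElem?_getD, List.getElem?_cons_succ, List.getElem?_replicate]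
    split_ifs <;> rfl
  have hcorners : ∀ i, IsCornerRow (a :: b :: List.replicate (u + 1) 1) i →
      i ∈ ({0, 1, u + 2} : Finset ℕ) := by
    rintro (_ | _ | j) hj
    · simp
    · simp
    · have hj : _ < _ := hj
      rw [show j + 1 + 1 + 1 = j + 1 + 2 by rfl, hgetD, hgetD] at hj
      simp only [Finset.mem_insert, Finset.mem_singleton]
      split_ifs at hj <;> omega
  have hlast : (a :: b :: List.replicate (u + 1) 1).modify (u + 2) (· - 1)
      = (a :: b :: List.replicate u 1) ++ [0] := by
    simp [List.replicate_succ_modify_pred]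
  rw [fSYT_eq_sum_ite_isCornerRow hl (n := a + b + u) (by simp; omega) _ hcorners,
    Finset.sum_insert (by simp), Finset.sum_insert (by simp), Finset.sum_singleton, hlast,
    fSYT_append_zero, if_pos (show IsCornerRow _ (u + 2) by simp [IsCornerRow]),
    ← add_assoc]
  simp [IsCornerRow]

/-- `Δ(x + 2, y + 1, z)` for the Vandermonde product `Δ`: the numerator of Frobenius' formula
for `f^(x,y,z)`. -/
def threeRowVandermonde (x y z : ℚ) : ℚ := (x - y + 1) * (y - z + 1) * (x - z + 2)

/-- Cleared of denominators, the induction needs no case split on empty rows: whenever a row of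
the branching recursion has no corner, the matching term on the right vanishes through a factor
`t` or a factor of `Δ` (two shifted row lengths coincide). -/
theorem fSYT_three_rows_mul {r s t : ℕ} (hts : t ≤ s) (hsr : s ≤ r) :
    (fSYT [r, s, t] : ℚ) * ((r + 2)! * (s + 1)! * t !)
      = (r + s + t)! * threeRowVandermonde r s t := by
  induction hn : r + s + t using Nat.strong_induction_on generalizing r s t with
  | _ n ih =>
  rcases n with _ | m
  · obtain ⟨rfl, rfl, rfl⟩ : r = 0 ∧ s = 0 ∧ t = 0 := by omega
    rw [show [0, 0, 0] = ([] ++ [0] ++ [0]) ++ [0] from rfl, fSYT_append_zero, fSYT_append_zero,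
      fSYT_append_zero, fSYT_nil]
    norm_num [threeRowVandermonde, Nat.factorial]
  obtain ⟨r, rfl⟩ : ∃ r', r = r' + 1 := ⟨r - 1, by omega⟩
  obtain rfl : m = r + s + t := by omega
  have hA : ((if s < r + 1 then fSYT [r, s, t] else 0 : ℕ) : ℚ)
      * ((r + 1 + 2)! * (s + 1)! * t !)
      = (r + 3) * ((r + s + t)! * threeRowVandermonde r s t) := by
    split_ifs with h
    · have := ih (r + s + t) (by omega) (r := r) (s := s) (t := t) (by omega) (by omega) rfl
      rw [show r + 1 + 2 = r + 2 + 1 by ring, Nat.factorial_succ (r + 2)]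
      push_cast
      linear_combination ((r : ℚ) + 3) * this
    · obtain rfl : s = r + 1 := by omega
      simp only [CharP.cast_eq_zero, zero_mul, threeRowVandermonde]
      push_cast
      ring
  have hB : ((if t < s then fSYT [r + 1, s - 1, t] else 0 : ℕ) : ℚ)
      * ((r + 1 + 2)! * (s + 1)! * t !)
      = (s + 1) * ((r + s + t)! * threeRowVandermonde (r + 1) (s - 1) t) := by
    split_ifs with h
    · obtain ⟨s, rfl⟩ : ∃ s', s = s' + 1 := ⟨s - 1, by omega⟩
      have := ih (r + (s + 1) + t) (by omega) (r := r + 1) (s := s) (t := t) (by omega) (by omega)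
        (by ring)
      rw [Nat.add_sub_cancel, Nat.factorial_succ (s + 1)]
      simp only [threeRowVandermonde] at this ⊢
      push_cast at this ⊢
      linear_combination ((s : ℚ) + 2) * this
    · obtain rfl : s = t := by omega
      simp only [CharP.cast_eq_zero, zero_mul, threeRowVandermonde]
      ring
  have hC : ((if 0 < t then fSYT [r + 1, s, t - 1] else 0 : ℕ) : ℚ)
      * ((r + 1 + 2)! * (s + 1)! * t !)
      = t * ((r + s + t)! * threeRowVandermonde (r + 1) s (t - 1)) := by
    split_ifs with h
    · obtain ⟨t, rfl⟩ : ∃ t', t = t' + 1 := ⟨t - 1, by omega⟩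
      have := ih (r + s + (t + 1)) (by omega) (r := r + 1) (s := s) (t := t) (by omega) (by omega)
        (by ring)
      rw [Nat.add_sub_cancel, Nat.factorial_succ t]
      simp only [threeRowVandermonde] at this ⊢
      push_cast at this ⊢
      linear_combination ((t : ℚ) + 1) * this
    · obtain rfl : t = 0 := by omega
      simp
  calc (fSYT [r + 1, s, t] : ℚ) * ((r + 1 + 2)! * (s + 1)! * t !)
      = (r + s + t)! * ((r + 3) * threeRowVandermonde r s t
          + (s + 1) * threeRowVandermonde (r + 1) (s - 1) t
          + t * threeRowVandermonde (r + 1) s (t - 1)) := by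
        rw [fSYT_three_rows_recursion hts hsr r.succ_pos, Nat.add_sub_cancel, Nat.cast_add,
          Nat.cast_add, add_mul, add_mul, hA, hB, hC]
        ring
    _ = (r + s + t + 1)! * threeRowVandermonde (r + 1 : ℕ) s t := by
        rw [Nat.factorial_succ]
        simp only [threeRowVandermonde]
        push_cast
        ring

def threeRowCount (r s t : ℕ) : ℚ :=
  (r + s + t)! * threeRowVandermonde r s t / ((r + 2)! * (s + 1)! * t !)

theorem fSYT_three_rows {r s t : ℕ} (hts : t ≤ s) (hsr : s ≤ r) :
    (fSYT [r, s, t] : ℚ) = threeRowCount r s t := by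
  rw [threeRowCount, ← fSYT_three_rows_mul hts hsr, mul_div_cancel_right₀ _ (by positivity)]

/-- `(t + 2, r + 2, s + 1)` is a cyclic permutation of `(r + 2, s + 1, t + 2)`. -/
lemma threeRowCount_rotate (r s t : ℕ) :
    threeRowCount r s (t + 2) = threeRowCount t (r + 1) (s + 1) := by
  rw [threeRowCount, threeRowCount, show r + s + (t + 2) = t + (r + 1) + (s + 1) by ring]
  simp only [threeRowVandermonde]
  push_cast
  ring

lemma threeRowCount_eq_zero {r s t : ℕ} (h : t = s + 1 ∨ t = r + 2) :
    threeRowCount r s t = 0 := by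
  rcases h with rfl | rfl <;> simp [threeRowCount, threeRowVandermonde]

/-- The hook length formula for `(a, b, 1^t)`, written with `b / b!` instead of `1 / (b - 1)!`
so that it vanishes at `b = 0`. -/
def hookCount (a b t : ℕ) : ℚ :=
  (a + b + t)! * (a - b + 1) * b / ((a + t + 1) * (b + t) * a ! * b ! * t !)

lemma hookCount_succ_succ_succ (a b u : ℕ) :
    hookCount (a + 1) (b + 1) (u + 1)
      = hookCount a (b + 1) (u + 1) + hookCount (a + 1) b (u + 1)
        + hookCount (a + 1) (b + 1) u := by
  simp only [hookCount]
  rw [show a + 1 + (b + 1) + (u + 1) = a + b + u + 2 + 1 by ring,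
    show a + (b + 1) + (u + 1) = a + b + u + 2 by ring,
    show a + 1 + b + (u + 1) = a + b + u + 2 by ring,
    show a + 1 + (b + 1) + u = a + b + u + 2 by ring,
    Nat.factorial_succ (a + b + u + 2), Nat.factorial_succ a, Nat.factorial_succ b,
    Nat.factorial_succ u]
  push_cast
  field_simp
  ring

lemma hookCount_zero_eq_threeRowCount (a : ℕ) {b : ℕ} (hb : 1 ≤ b) :
    hookCount a b 0 = threeRowCount a b 0 := by
  obtain ⟨b, rfl⟩ : ∃ b', b = b' + 1 := ⟨b - 1, by omega⟩
  simp only [hookCount, threeRowCount, threeRowVandermonde]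
  rw [Nat.factorial_succ (a + 1), Nat.factorial_succ a, Nat.factorial_succ (b + 1)]
  push_cast
  field_simp
  ring

theorem fSYT_hook {a b : ℕ} (hb : 1 ≤ b) (hba : b ≤ a) (t : ℕ) :
    (fSYT (a :: b :: List.replicate t 1) : ℚ) = hookCount a b t := by
  induction hn : a + b + t using Nat.strong_induction_on generalizing a b t with
  | _ n ih =>
  rcases t with _ | u
  · rw [List.replicate_zero, ← fSYT_append_zero, hookCount_zero_eq_threeRowCount a hb]
    exact fSYT_three_rows (Nat.zero_le b) hba
  obtain ⟨a, rfl⟩ : ∃ a', a = a' + 1 := ⟨a - 1, by omega⟩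
  obtain ⟨b, rfl⟩ : ∃ b', b = b' + 1 := ⟨b - 1, by omega⟩
  have hA : ((if b + 1 < a + 1 then fSYT (a :: (b + 1) :: List.replicate (u + 1) 1) else 0 : ℕ)
      : ℚ) = hookCount a (b + 1) (u + 1) := by
    split_ifs with h
    · exact ih _ (by omega) (by omega) (by omega) _ rfl
    · obtain rfl : a = b := by omega
      simp [hookCount]
  have hB : ((if 1 < b + 1 then fSYT ((a + 1) :: b :: List.replicate (u + 1) 1) else 0 : ℕ)
      : ℚ) = hookCount (a + 1) b (u + 1) := by
    split_ifs with h
    · exact ih _ (by omega) (by omega) (by omega) _ rfl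
    · obtain rfl : b = 0 := by omega
      simp [hookCount]
  rw [fSYT_hook_recursion hb hba, Nat.add_sub_cancel, Nat.add_sub_cancel, Nat.cast_add,
    Nat.cast_add, hA, hB, ih _ (by omega) hb hba _ rfl, hookCount_succ_succ_succ]

lemma hookCount_add_hookCount_add_hookCount (k m : ℕ) :
    hookCount k k (m + 4) + hookCount (k + 1) (k + 1) (m + 2) + hookCount (k + 2) (k + 2) m
      = hookCount (k + 2) k (m + 2) + threeRowCount k k (m + 4) := by
  simp only [hookCount, threeRowCount, threeRowVandermonde]
  rw [show k + 1 + (k + 1) + (m + 2) = k + k + (m + 4) by ring,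
    show k + 2 + (k + 2) + m = k + k + (m + 4) by ring,
    show k + 2 + k + (m + 2) = k + k + (m + 4) by ring]
  simp only [Nat.factorial_succ (k + 1), Nat.factorial_succ k, Nat.factorial_succ (m + 3),
    Nat.factorial_succ (m + 2), Nat.factorial_succ (m + 1), Nat.factorial_succ m]
  push_cast
  field_simp
  ring

/-- **Lemma.** For `k ≥ 2`, `m ≥ 4`, let
`L(k,m) = f^{(k,k,1^m)} + f^{(k+1,k+1,1^{m-2})} + f^{(k+2,k+2,1^{m-4})}`. Then
`L(k,m) = f^{(k+2,k,1^{m-2})} + f^{(k,k,m)}` if `m ≤ k`;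
`L(k,m) = f^{(k+2,k,1^{m-2})}` if `m = k+1` or `m = k+2`;
`L(k,m) = f^{(k+2,k,1^{m-2})} + f^{(m-2,k+1,k+1)}` if `m ≥ k+3`. -/
theorem L_three_term_identity (k m : ℕ) (hk : 2 ≤ k) (hm : 4 ≤ m) :
    ((m ≤ k →
      fSYT (k :: k :: List.replicate m 1)
        + fSYT ((k + 1) :: (k + 1) :: List.replicate (m - 2) 1)
        + fSYT ((k + 2) :: (k + 2) :: List.replicate (m - 4) 1)
      = fSYT ((k + 2) :: k :: List.replicate (m - 2) 1) + fSYT [k, k, m]) ∧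
    ((m = k + 1 ∨ m = k + 2) →
      fSYT (k :: k :: List.replicate m 1)
        + fSYT ((k + 1) :: (k + 1) :: List.replicate (m - 2) 1)
        + fSYT ((k + 2) :: (k + 2) :: List.replicate (m - 4) 1)
      = fSYT ((k + 2) :: k :: List.replicate (m - 2) 1)) ∧
    (k + 3 ≤ m →
      fSYT (k :: k :: List.replicate m 1)
        + fSYT ((k + 1) :: (k + 1) :: List.replicate (m - 2) 1)
        + fSYT ((k + 2) :: (k + 2) :: List.replicate (m - 4) 1)
      = fSYT ((k + 2) :: k :: List.replicate (m - 2) 1)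
        + fSYT [m - 2, k + 1, k + 1])) := by
  obtain ⟨m, rfl⟩ : ∃ m', m = m' + 4 := ⟨m - 4, by omega⟩
  have hL : (fSYT (k :: k :: List.replicate (m + 4) 1)
        + fSYT ((k + 1) :: (k + 1) :: List.replicate (m + 2) 1)
        + fSYT ((k + 2) :: (k + 2) :: List.replicate m 1) : ℚ)
      = fSYT ((k + 2) :: k :: List.replicate (m + 2) 1) + threeRowCount k k (m + 4) := by
    rw [fSYT_hook (by omega) le_rfl, fSYT_hook (by omega) le_rfl, fSYT_hook (by omega) le_rfl,
      fSYT_hook (by omega) (by omega), hookCount_add_hookCount_add_hookCount]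
  refine ⟨fun h => ?_, fun h => ?_, fun h => ?_⟩ <;> apply Nat.cast_injective (R := ℚ) <;>
    push_cast
  · rw [hL, fSYT_three_rows h le_rfl]
  · rw [hL, threeRowCount_eq_zero (by omega), add_zero]
  · rw [hL, threeRowCount_rotate, fSYT_three_rows le_rfl (by omega)]
end

section
/- Let k > m ≥ 2 be integers with k ≡ m (mod 2), and for an integer j with 0 ≤ j ≤ (k−m)/2 − 1 define the rational number s(j) = ((m+2k)! · (m+2j−k+1) · (m−k+4j+2) · (2j+1)) / ((m+2j+2)! · (k+1)! · (k−2j)!). Then s((k−m)/2 − 1 − j) = −s(j) for all 0 ≤ j ≤ (k−m)/2 − 1, and consequently Σ_{j=0}^{(k−m)/2 − 1} s(j) = 0. -/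
/-!
Write `k = m + 2d`. The substitution `j ↦ d - 1 - j` swaps the factorials `(m+2j+2)!` and
`(k-2j)!` in the denominator and permutes the three linear factors of the numerator, each up to
a sign: `2j+1 ↦ -(m+2j-k+1)`, `m+2j-k+1 ↦ -(2j+1)` and `m-k+4j+2 ↦ -(m-k+4j+2)`. So `s` is odd
under the reflection of `{0, …, d-1}`, and its sum over that range vanishes.
-/

/-- The rational number
`s(j) = (m+2k)! (m+2j-k+1)(m-k+4j+2)(2j+1) / ((m+2j+2)! (k+1)! (k-2j)!)`. -/
def sfun (k m j : ℕ) : ℚ :=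
  (Nat.factorial (m + 2 * k) * ((m : ℚ) + 2 * j - k + 1) * ((m : ℚ) - k + 4 * j + 2) *
      (2 * (j : ℚ) + 1)) /
    (Nat.factorial (m + 2 * j + 2) * Nat.factorial (k + 1) * Nat.factorial (k - 2 * j))

theorem Finset.sum_range_eq_zero_of_reflect_eq_neg {M : Type*} [AddCommGroup M]
    [IsAddTorsionFree M] {f : ℕ → M} {n : ℕ} (hf : ∀ j < n, f (n - 1 - j) = -f j) :
    ∑ j ∈ range n, f j = 0 := by
  have hsum : ∑ j ∈ range n, f (n - 1 - j) = ∑ j ∈ range n, -f j :=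
    sum_congr rfl fun j hj => hf j (mem_range.mp hj)
  rw [sum_range_reflect, sum_neg_distrib] at hsum
  exact neg_eq_self.mp hsum.symm

theorem sfun_eq_neg_of_add_add_one_eq {m d j j' : ℕ} (hjj' : j + j' + 1 = d) :
    sfun (m + 2 * d) m j' = -sfun (m + 2 * d) m j := by
  subst hjj'
  have hfac_left : m + 2 * j' + 2 = m + 2 * (j + j' + 1) - 2 * j := by omega
  have hfac_right : m + 2 * (j + j' + 1) - 2 * j' = m + 2 * j + 2 := by omega
  unfold sfun
  rw [hfac_left, hfac_right, ← neg_div, div_eq_div_iff (by positivity) (by positivity)]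
  push_cast
  ring

theorem sfun_antisymmetry_and_sum_zero_general (k m : ℕ) (hmk : m < k)
    (hpar : k % 2 = m % 2) :
    (∀ j ≤ (k - m) / 2 - 1, sfun k m ((k - m) / 2 - 1 - j) = - sfun k m j) ∧
    ∑ j ∈ Finset.range ((k - m) / 2), sfun k m j = 0 := by
  obtain ⟨d, rfl⟩ : ∃ d, k = m + 2 * d := ⟨(k - m) / 2, by omega⟩
  have hd : (m + 2 * d - m) / 2 = d := by omega
  have hreflect : ∀ j < d, sfun (m + 2 * d) m (d - 1 - j) = -sfun (m + 2 * d) m j :=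
    fun j hj => sfun_eq_neg_of_add_add_one_eq (by omega)
  rw [hd]
  exact ⟨fun j hj => hreflect j (by omega),
    Finset.sum_range_eq_zero_of_reflect_eq_neg hreflect⟩

/-- Let `k > m ≥ 2` with `k ≡ m (mod 2)`. Then `s((k-m)/2 - 1 - j) = -s(j)` for all
`0 ≤ j ≤ (k-m)/2 - 1`, and consequently `Σ_{j=0}^{(k-m)/2 - 1} s(j) = 0`. -/
theorem sfun_antisymmetry_and_sum_zero (k m : ℕ) (hm : 2 ≤ m) (hmk : m < k)
    (hpar : k % 2 = m % 2) :
    (∀ j ≤ (k - m) / 2 - 1, sfun k m ((k - m) / 2 - 1 - j) = - sfun k m j) ∧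
    ∑ j ∈ Finset.range ((k - m) / 2), sfun k m j = 0 :=
  sfun_antisymmetry_and_sum_zero_general k m hmk hpar
end

section
/- For nonnegative integers x, y, z with z ≥ 2, the identity h(x,y,z) = h(z−2, x+1, y+1) holds, where h(x,y,z) = ((x+y+z)! / ((x+2)! · (y+1)! · z!)) · (x−y+1) · (x−z+2) · (y−z+1) is viewed as a rational number. -/
/-- The rational number `h(x,y,z) = (x+y+z)!/((x+2)!(y+1)! z!) · (x-y+1)(x-z+2)(y-z+1)`;
when `(x,y,z)` is a partition it equals `f^{(x,y,z)}` by the hook length formula. -/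
def hfun (x y z : ℕ) : ℚ :=
  (Nat.factorial (x + y + z) : ℚ) /
      (Nat.factorial (x + 2) * Nat.factorial (y + 1) * Nat.factorial z)
    * ((x : ℚ) - y + 1) * ((x : ℚ) - z + 2) * ((y : ℚ) - z + 1)

/-- For nonnegative integers `x, y, z` with `z ≥ 2`, `h(x,y,z) = h(z-2, x+1, y+1)`. -/
theorem hfun_swap (x y z : ℕ) (hz : 2 ≤ z) :
    hfun x y z = hfun (z - 2) (x + 1) (y + 1) := by
  obtain ⟨w, rfl⟩ := Nat.exists_eq_add_of_le' hz
  -- Same numerator, permuted denominator; the linear factors agree up to two sign changes.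
  have hsum : x + y + (w + 2) = w + (x + 1) + (y + 1) := by ring
  simp only [hfun, Nat.add_sub_cancel, hsum]
  push_cast
  ring
end
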